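/- arXiv:2208.08310 — 4 statements merged into one kernel-verified Lean document; each statement's English description precedes it below -/
import Mathlib

section
/- Let (γ,E) be a digraph and let F₁, F₂ be finite in-trees. The map φ sending a digraph homomorphism τ from (γ,E) to F₁ ⋆ F₂ to the pair (π₁ ∘ τ, π₂ ∘ τ) is a bijection from the set of digraph homomorphisms (γ,E) → F₁ ⋆ F₂ onto the set of pairs (τ₁, τ₂), where τ₁ is a homomorphism (γ,E) → F₁ and τ₂ is a homomorphism (γ,E) → F₂ satisfying height(τ₁ u) = height(τ₂ u) for every u : γ. -/
namespace DDS

/-- A homomorphism of digraphs `(γ, E) → (δ, E')` is a map preserving edges. -/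
def IsHom {γ : Type*} {δ : Type*} (E : γ → γ → Prop) (E' : δ → δ → Prop) (τ : γ → δ) : Prop :=
  ∀ ⦃u v⦄, E u v → E' (τ u) (τ v)

/-- Two digraphs are isomorphic if there is an edge-preserving (in both directions) bijection. -/
def Isomorphic {γ : Type*} {δ : Type*} (E : γ → γ → Prop) (E' : δ → δ → Prop) : Prop :=
  ∃ e : γ ≃ δ, ∀ u v, E u v ↔ E' (e u) (e v)

/-- The number of digraph homomorphisms from `(γ, E)` to `(δ, E')`. -/
noncomputable def homCount (γ : Type*) (δ : Type*) (E : γ → γ → Prop) (E' : δ → δ → Prop) : ℕ :=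
  Nat.card {τ : γ → δ // IsHom E E' τ}

/-- An in-tree: a root and a parent map such that the root is a fixed point and every
vertex reaches the root by iterating the parent map. -/
structure InTree (V : Type*) where
  root : V
  parent : V → V
  parent_root : parent root = root
  reaches_root : ∀ v, ∃ k, parent^[k] v = root

namespace InTree

variable {V : Type*}

/-- Edges of an in-tree are directed towards the root. -/
def Edge (T : InTree V) (v w : V) : Prop := v ≠ T.root ∧ w = T.parent v

/-- The height of a vertex: the least `k` with `parent^[k] v = root`. -/
noncomputable def height (T : InTree V) (v : V) : ℕ := sInf {k | T.parent^[k] v = T.root}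

lemma height_spec (T : InTree V) (v : V) : T.parent^[T.height v] v = T.root :=
  Nat.sInf_mem (T.reaches_root v)

@[simp] lemma height_root (T : InTree V) : T.height T.root = 0 :=
  Nat.sInf_eq_zero.mpr (Or.inl (by simp))

lemma height_eq_zero_iff (T : InTree V) {v : V} : T.height v = 0 ↔ v = T.root := by
  constructor
  · intro h
    have hs := T.height_spec v
    rw [h] at hs
    simpa using hs
  · rintro rfl
    exact T.height_root

lemma height_parent (T : InTree V) {v : V} (hv : v ≠ T.root) :
    T.height v = T.height (T.parent v) + 1 := by
  have h1 : T.height v ≠ 0 := fun h => hv (T.height_eq_zero_iff.mp h)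
  obtain ⟨m, hm⟩ := Nat.exists_eq_succ_of_ne_zero h1
  have hsp : T.parent^[T.height v] v = T.root := T.height_spec v
  rw [hm, Function.iterate_succ_apply] at hsp
  have hle : T.height (T.parent v) ≤ m := Nat.sInf_le hsp
  have hge : T.height v ≤ T.height (T.parent v) + 1 := by
    apply Nat.sInf_le
    show T.parent^[T.height (T.parent v) + 1] v = T.root
    rw [Function.iterate_succ_apply]
    exact T.height_spec (T.parent v)
  omega

lemma height_parent_le (T : InTree V) (v : V) : T.height (T.parent v) ≤ T.height v := by
  by_cases hv : v = T.root
  · subst hv; rw [T.parent_root]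
  · rw [T.height_parent hv]; omega

/-- The height of a finite in-tree: the maximum height of a vertex. -/
noncomputable def treeHeight [Fintype V] (T : InTree V) : ℕ := Finset.univ.sup T.height

section Star

variable {V₁ V₂ : Type*} (T₁ : InTree V₁) (T₂ : InTree V₂)

/-- Vertices of the `⋆` product: pairs of vertices of equal height. -/
def StarVertex := {x : V₁ × V₂ // T₁.height x.1 = T₂.height x.2}

lemma star_parent_mem (x : V₁ × V₂) (hx : T₁.height x.1 = T₂.height x.2) :
    T₁.height (T₁.parent x.1) = T₂.height (T₂.parent x.2) := by
  by_cases h : x.1 = T₁.root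
  · have h2 : x.2 = T₂.root := by
      apply T₂.height_eq_zero_iff.mp
      rw [← hx, h, T₁.height_root]
    rw [h, h2, T₁.parent_root, T₂.parent_root, T₁.height_root, T₂.height_root]
  · have h2 : x.2 ≠ T₂.root := by
      intro hc
      apply h
      apply T₁.height_eq_zero_iff.mp
      rw [hx, hc, T₂.height_root]
    have e1 := T₁.height_parent h
    have e2 := T₂.height_parent h2
    omega

/-- The parent map of the `⋆` product. -/
def starParent (x : StarVertex T₁ T₂) : StarVertex T₁ T₂ :=
  ⟨(T₁.parent x.1.1, T₂.parent x.1.2), star_parent_mem T₁ T₂ x.1 x.2⟩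

lemma starParent_iterate (k : ℕ) (x : StarVertex T₁ T₂) :
    ((starParent T₁ T₂)^[k] x).1 = (T₁.parent^[k] x.1.1, T₂.parent^[k] x.1.2) := by
  induction k generalizing x with
  | zero => simp
  | succ k ih =>
      rw [Function.iterate_succ_apply, Function.iterate_succ_apply,
        Function.iterate_succ_apply, ih]
      rfl

/-- The `⋆` product of two in-trees. -/
def star : InTree (StarVertex T₁ T₂) where
  root := ⟨(T₁.root, T₂.root), by simp⟩
  parent := starParent T₁ T₂
  parent_root := by
    apply Subtype.ext
    show (T₁.parent T₁.root, T₂.parent T₂.root) = (T₁.root, T₂.root)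
    rw [T₁.parent_root, T₂.parent_root]
  reaches_root := by
    intro x
    refine ⟨T₁.height x.1.1, Subtype.ext ?_⟩
    rw [starParent_iterate]
    have h1 : T₁.parent^[T₁.height x.1.1] x.1.1 = T₁.root := T₁.height_spec _
    have h2 : T₂.parent^[T₁.height x.1.1] x.1.2 = T₂.root := by
      rw [x.2]; exact T₂.height_spec _
    show (_, _) = (T₁.root, T₂.root)
    rw [h1, h2]

end Star

section Cut

variable (T : InTree V) (t : ℕ)

/-- Vertices of the cut at level `t`: vertices of height at most `t`. -/
def CutVertex := {v : V // T.height v ≤ t}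

/-- The parent map of the cut. -/
def cutParent (x : CutVertex T t) : CutVertex T t :=
  ⟨T.parent x.1, le_trans (T.height_parent_le x.1) x.2⟩

lemma cutParent_iterate (k : ℕ) (x : CutVertex T t) :
    ((cutParent T t)^[k] x).1 = T.parent^[k] x.1 := by
  induction k generalizing x with
  | zero => simp
  | succ k ih =>
      rw [Function.iterate_succ_apply, Function.iterate_succ_apply, ih]
      rfl

/-- The cut of an in-tree at level `t`: the sub-in-tree induced on vertices of height `≤ t`. -/
def cut : InTree (CutVertex T t) where
  root := ⟨T.root, by simp⟩
  parent := cutParent T t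
  parent_root := Subtype.ext T.parent_root
  reaches_root := fun x =>
    ⟨T.height x.1, Subtype.ext (by rw [cutParent_iterate]; exact T.height_spec x.1)⟩

end Cut

end InTree

section Unroll

variable {α : Type*} (f : α → α) (v : α)

/-- Vertices of the unroll of the functional graph of `f` from `v`. -/
def UnrollVertex := {ui : α × ℕ // f^[ui.2] ui.1 = v}

/-- The parent map of the unroll: `(u, i+1) ↦ (f u, i)`, fixing the root `(v, 0)`. -/
def unrollParent : UnrollVertex f v → UnrollVertex f v
  | ⟨(u, 0), h⟩ => ⟨(u, 0), h⟩
  | ⟨(u, i+1), h⟩ => ⟨(f u, i), by rw [← Function.iterate_succ_apply]; exact h⟩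

lemma unrollParent_iterate :
    ∀ (i : ℕ) (u : α) (h : f^[i] u = v),
      (unrollParent f v)^[i] ⟨(u, i), h⟩ = ⟨(v, 0), rfl⟩ := by
  intro i
  induction i with
  | zero =>
      intro u h
      have hu : u = v := by simpa using h
      subst hu
      rfl
  | succ i ih =>
      intro u h
      show (unrollParent f v)^[i] ⟨(f u, i), _⟩ = _
      exact ih (f u) _

/-- The unroll of the functional graph of `f : α → α` from the point `v`. -/
def unroll : InTree (UnrollVertex f v) where
  root := ⟨(v, 0), rfl⟩
  parent := unrollParent f v
  parent_root := rfl
  reaches_root := fun x => ⟨x.1.2, by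
    obtain ⟨⟨u, i⟩, h⟩ := x
    exact unrollParent_iterate f v i u h⟩

end Unroll

section FG

/-- The number of periodic points of `f`. -/
noncomputable def periodicCount {α : Type*} (f : α → α) : ℕ :=
  Nat.card {x : α // ∃ n, 1 ≤ n ∧ f^[n] x = x}

/-- A functional graph is connected if the equivalence relation generated by
`x ∼ f x` relates all pairs of points. -/
def FGConnected {α : Type*} (f : α → α) : Prop :=
  ∀ x y : α, Relation.EqvGen (fun u w => f u = w) x y

/-- Isomorphism of functional graphs. -/
def FGIso {α β : Type*} (f : α → α) (g : β → β) : Prop :=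
  ∃ e : α ≃ β, ∀ x, e (f x) = g (e x)

/-- The product of two functional graphs. -/
def prodMap {α γ : Type*} (f : α → α) (h : γ → γ) : α × γ → α × γ :=
  fun z => (f z.1, h z.2)

/-- `FGContains f h g` means the functional graph of `g` is (isomorphic to) a union of
connected components of the product `f × h`. -/
def FGContains {α γ β : Type*} (f : α → α) (h : γ → γ) (g : β → β) : Prop :=
  ∃ e : β → α × γ, Function.Injective e ∧ e ∘ g = prodMap f h ∘ e ∧
    ∀ z, prodMap f h z ∈ Set.range e → z ∈ Set.range e

end FG

end DDS

open DDS DDS.InTree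

namespace DDS.InTree

variable {V₁ V₂ : Type*} {T₁ : InTree V₁} {T₂ : InTree V₂}

lemma star_eq_root_iff_fst (x : StarVertex T₁ T₂) :
    x = (T₁.star T₂).root ↔ x.1.1 = T₁.root := by
  obtain ⟨⟨a, b⟩, hab⟩ := x
  refine ⟨fun h => congrArg (fun y => y.1.1) h, fun ha => Subtype.ext (Prod.ext ha ?_)⟩
  exact T₂.height_eq_zero_iff.mp (by rw [← hab, ha, height_root])

lemma star_eq_root_iff_snd (x : StarVertex T₁ T₂) :
    x = (T₁.star T₂).root ↔ x.1.2 = T₂.root := by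
  obtain ⟨⟨a, b⟩, hab⟩ := x
  refine ⟨fun h => congrArg (fun y => y.1.2) h, fun hb => Subtype.ext (Prod.ext ?_ hb)⟩
  exact T₁.height_eq_zero_iff.mp (by rw [hab, hb, height_root])

lemma star_edge_iff (x y : StarVertex T₁ T₂) :
    (T₁.star T₂).Edge x y ↔ T₁.Edge x.1.1 y.1.1 ∧ T₂.Edge x.1.2 y.1.2 := by
  have hparent : y = (T₁.star T₂).parent x ↔
      y.1.1 = T₁.parent x.1.1 ∧ y.1.2 = T₂.parent x.1.2 := by
    refine ⟨fun h => ⟨congrArg (fun z => z.1.1) h, congrArg (fun z => z.1.2) h⟩,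
      fun ⟨h₁, h₂⟩ => Subtype.ext (Prod.ext h₁ h₂)⟩
  have hroot₁ := (star_eq_root_iff_fst x).not
  have hroot₂ := (star_eq_root_iff_snd x).not
  simp only [Edge, hparent]
  tauto

lemma isHom_star_iff {γ : Type*} (E : γ → γ → Prop) (τ : γ → StarVertex T₁ T₂) :
    IsHom E (T₁.star T₂).Edge τ ↔
      IsHom E T₁.Edge (fun u => (τ u).1.1) ∧ IsHom E T₂.Edge (fun u => (τ u).1.2) := by
  simp only [IsHom, star_edge_iff, ← forall_and]

end DDS.InTree

theorem star_proj_bijOn_general {γ V₁ V₂ : Type*}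
    (E : γ → γ → Prop) (F₁ : InTree V₁) (F₂ : InTree V₂) :
    Set.BijOn (fun (τ : γ → StarVertex F₁ F₂) => ((fun u => (τ u).1.1), (fun u => (τ u).1.2)))
      {τ | IsHom E (F₁.star F₂).Edge τ}
      {p : (γ → V₁) × (γ → V₂) | IsHom E F₁.Edge p.1 ∧ IsHom E F₂.Edge p.2 ∧
        ∀ u, F₁.height (p.1 u) = F₂.height (p.2 u)} := by
  refine ⟨?_, ?_, ?_⟩
  · intro τ hτ
    obtain ⟨h₁, h₂⟩ := (isHom_star_iff E τ).mp hτ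
    exact ⟨h₁, h₂, fun u => (τ u).2⟩
  · intro τ _ σ _ h
    funext u
    exact Subtype.ext (Prod.ext (congrFun (congrArg Prod.fst h) u)
      (congrFun (congrArg Prod.snd h) u))
  · rintro ⟨τ₁, τ₂⟩ ⟨h₁, h₂, hheight⟩
    exact ⟨fun u => ⟨(τ₁ u, τ₂ u), hheight u⟩, (isHom_star_iff E _).mpr ⟨h₁, h₂⟩, rfl⟩

/-- The map `φ : τ ↦ (π₁ ∘ τ, π₂ ∘ τ)` is a bijection from the set of digraph homomorphisms
`(γ, E) → F₁ ⋆ F₂` onto the set of pairs of homomorphisms to `F₁` and `F₂` which agree on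
heights pointwise. -/
theorem star_proj_bijOn {γ V₁ V₂ : Type*} [Fintype V₁] [Fintype V₂]
    (E : γ → γ → Prop) (F₁ : InTree V₁) (F₂ : InTree V₂) :
    Set.BijOn (fun (τ : γ → StarVertex F₁ F₂) => ((fun u => (τ u).1.1), (fun u => (τ u).1.2)))
      {τ | IsHom E (F₁.star F₂).Edge τ}
      {p : (γ → V₁) × (γ → V₂) | IsHom E F₁.Edge p.1 ∧ IsHom E F₂.Edge p.2 ∧
        ∀ u, F₁.height (p.1 u) = F₂.height (p.2 u)} :=
  star_proj_bijOn_general E F₁ F₂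
end

section
/- For any finite in-trees F, X, and Y all of the same height, if the digraphs of the ⋆ products F ⋆ X and F ⋆ Y are isomorphic, then the digraphs of X and Y are isomorphic. -/
open DDS DDS.InTree

/-!
Count the *level maps* `s → X` from a test in-tree `s`: maps commuting with the parent maps and
preserving heights. Their number is multiplicative for `⋆`, it is positive for `s → F` when
`s` is no higher than `F`, and it vanishes for `s → X` and `s → Y` otherwise; hence
`F ⋆ X ≅ F ⋆ Y` forces equal counts of level maps into `X` and into `Y` from every `s`.
Grouping level maps by their kernel and inducting on `|s|` (Lovász) upgrades this to equal
counts of injective level maps. So `X` and `Y` embed into each other, and an injective level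
map between trees of the same size is an isomorphism.
-/

namespace Setoid

variable {T : Type*}

noncomputable instance [Finite T] : Fintype (Setoid T) :=
  have : Finite (Setoid T) := .of_injective (fun c : Setoid T => ⇑c) fun _ _ => eq_iff_rel_eq.mpr
  Fintype.ofFinite _

lemma card_quotient_lt_of_ne_bot [Finite T] {c : Setoid T} (hc : c ≠ ⊥) :
    Nat.card (Quotient c) < Nat.card T := by
  have := Fintype.ofFinite T
  have := Fintype.ofFinite (Quotient c)
  simp only [Nat.card_eq_fintype_card]
  refine Fintype.card_lt_of_surjective_not_injective _ Quotient.mk_surjective fun hinj => hc ?_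
  rw [← ker_mk_eq c]
  exact ker_eq_bot_iff.mpr hinj

end Setoid

namespace DDS.InTree

variable {T A B : Type*}

section Height

variable (t : InTree T)

lemma parent_eq_self_iff {v : T} : t.parent v = v ↔ v = t.root := by
  refine ⟨fun h => ?_, fun h => h ▸ t.parent_root⟩
  obtain ⟨k, hk⟩ := t.reaches_root v
  rwa [Function.iterate_fixed h] at hk

lemma height_parent_eq_sub_one (v : T) : t.height (t.parent v) = t.height v - 1 := by
  by_cases hv : v = t.root
  · simp [hv, t.parent_root]
  · rw [t.height_parent hv]; rfl

lemma height_iterate_parent (v : T) (k : ℕ) :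
    t.height (t.parent^[k] v) = t.height v - k := by
  induction k with
  | zero => rfl
  | succ k ih => rw [Function.iterate_succ_apply', height_parent_eq_sub_one, ih]; omega

lemma iterate_parent_of_height_le {v : T} {k : ℕ} (hk : t.height v ≤ k) :
    t.parent^[k] v = t.root :=
  t.height_eq_zero_iff.mp (by rw [height_iterate_parent]; omega)

lemma height_le_treeHeight [Fintype T] (v : T) : t.height v ≤ t.treeHeight :=
  Finset.le_sup (Finset.mem_univ v)

lemma exists_height_eq_treeHeight [Fintype T] : ∃ v, t.height v = t.treeHeight := by
  obtain ⟨v, -, hv⟩ := Finset.exists_mem_eq_sup Finset.univ ⟨t.root, Finset.mem_univ _⟩ t.height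
  exact ⟨v, hv.symm⟩

end Height

variable {t : InTree T} {a : InTree A} {b : InTree B}

lemma map_root_of_semiconj {σ : T → A} (hσ : Function.Semiconj σ t.parent a.parent) :
    σ t.root = a.root :=
  a.parent_eq_self_iff.mp (by rw [← hσ, t.parent_root])

lemma height_apply_of_semiconj {σ : T → A} (hσ : Function.Semiconj σ t.parent a.parent)
    (hroot : ∀ x, σ x = a.root → x = t.root) (x : T) : a.height (σ x) = t.height x := by
  have hset : ∀ k, a.parent^[k] (σ x) = a.root ↔ t.parent^[k] x = t.root := fun k => by
    rw [← hσ.iterate_right k x]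
    exact ⟨hroot _, fun h => h ▸ map_root_of_semiconj hσ⟩
  simp only [height, hset]

lemma isomorphic_edge_of_bijective {σ : T → A} (hσ : Function.Semiconj σ t.parent a.parent)
    (hbij : Function.Bijective σ) : Isomorphic t.Edge a.Edge := by
  refine ⟨Equiv.ofBijective σ hbij, fun u v => ?_⟩
  simp only [Edge, Equiv.ofBijective_apply, ← hσ u, hbij.injective.eq_iff,
    ← map_root_of_semiconj hσ, hbij.injective.ne_iff]

lemma exists_edge_iff (v : T) : (∃ w, t.Edge v w) ↔ v ≠ t.root :=
  ⟨fun ⟨_, hv, _⟩ => hv, fun hv => ⟨_, hv, rfl⟩⟩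

lemma exists_semiconj_of_isomorphic (h : Isomorphic t.Edge a.Edge) :
    ∃ e : T ≃ A, Function.Semiconj e t.parent a.parent := by
  obtain ⟨e, he⟩ := h
  have hroot : e t.root = a.root := by
    by_contra hne
    obtain ⟨w, hw⟩ := (exists_edge_iff (e t.root)).mpr hne
    rw [← e.apply_symm_apply w, ← he] at hw
    exact hw.1 rfl
  refine ⟨e, fun x => ?_⟩
  by_cases hx : x = t.root
  · rw [hx, t.parent_root, hroot, a.parent_root]
  · exact ((he x _).mp ⟨hx, rfl⟩).2

structure IsLevelHom (t : InTree T) (a : InTree A) (σ : T → A) : Prop where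
  semiconj : Function.Semiconj σ t.parent a.parent
  height_apply : ∀ x, a.height (σ x) = t.height x

lemma IsLevelHom.id : IsLevelHom t t id := ⟨fun _ => rfl, fun _ => rfl⟩

lemma IsLevelHom.comp {τ : A → B} {σ : T → A} (hτ : IsLevelHom a b τ) (hσ : IsLevelHom t a σ) :
    IsLevelHom t b (τ ∘ σ) :=
  ⟨hτ.semiconj.comp_left hσ.semiconj, fun x => (hτ.height_apply _).trans (hσ.height_apply x)⟩

lemma IsLevelHom.of_injective {σ : T → A} (hσ : Function.Semiconj σ t.parent a.parent)
    (hinj : Function.Injective σ) : IsLevelHom t a σ :=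
  ⟨hσ, height_apply_of_semiconj hσ fun _ h => hinj (h.trans (map_root_of_semiconj hσ).symm)⟩

noncomputable def levelHomCount (t : InTree T) (a : InTree A) : ℕ :=
  Nat.card {σ : T → A // IsLevelHom t a σ}

noncomputable def levelEmbCount (t : InTree T) (a : InTree A) : ℕ :=
  Nat.card {σ : T → A // IsLevelHom t a σ ∧ Function.Injective σ}

lemma levelHomCount_congr_right (e : A ≃ B) (he : Function.Semiconj e a.parent b.parent) :
    levelHomCount t a = levelHomCount t b := by
  have hlevel : IsLevelHom a b e := .of_injective he e.injective
  have hlevel_symm : IsLevelHom b a e.symm :=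
    .of_injective (fun y => e.injective (by simp [he _])) e.symm.injective
  refine Nat.card_congr (Equiv.subtypeEquiv ((Equiv.refl T).arrowCongr e) fun σ =>
    ⟨hlevel.comp, fun h => ?_⟩)
  simpa [Function.comp_def] using hlevel_symm.comp h

lemma levelEmbCount_self_pos [Finite T] (t : InTree T) : 0 < levelEmbCount t t :=
  have : Nonempty {σ : T → T // IsLevelHom t t σ ∧ Function.Injective σ} :=
    ⟨id, .id, Function.injective_id⟩
  Nat.card_pos

section Star

variable (a b)

lemma isLevelHom_star_fst : IsLevelHom (a.star b) a (fun x => x.1.1) := by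
  refine ⟨fun _ => rfl, height_apply_of_semiconj (fun _ => rfl) fun x hx => Subtype.ext ?_⟩
  have hx₂ : b.height x.1.2 = 0 := by rw [← x.2, hx, a.height_root]
  exact Prod.ext hx (b.height_eq_zero_iff.mp hx₂)

lemma isLevelHom_star_snd : IsLevelHom (a.star b) b (fun x => x.1.2) :=
  ⟨fun _ => rfl, fun x => by rw [← x.2]; exact (isLevelHom_star_fst a b).height_apply x⟩

def levelHomStarEquiv (t : InTree T) :
    {σ // IsLevelHom t (a.star b) σ} ≃ {σ // IsLevelHom t a σ} × {σ // IsLevelHom t b σ} where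
  toFun σ := (⟨_, (isLevelHom_star_fst a b).comp σ.2⟩, ⟨_, (isLevelHom_star_snd a b).comp σ.2⟩)
  invFun σ := ⟨fun x => ⟨(σ.1.1 x, σ.2.1 x), by rw [σ.1.2.height_apply, σ.2.2.height_apply]⟩,
    fun x => Subtype.ext (Prod.ext (σ.1.2.semiconj x) (σ.2.2.semiconj x)),
    fun x => ((isLevelHom_star_fst a b).height_apply _).symm.trans (σ.1.2.height_apply x)⟩
  left_inv _ := rfl
  right_inv _ := rfl

lemma levelHomCount_star (t : InTree T) :
    levelHomCount t (a.star b) = levelHomCount t a * levelHomCount t b := by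
  rw [levelHomCount, Nat.card_congr (levelHomStarEquiv a b t), Nat.card_prod]; rfl

end Star

lemma levelHomCount_pos [Fintype T] [Fintype A] (t : InTree T) (a : InTree A)
    (h : t.treeHeight ≤ a.treeHeight) : 0 < levelHomCount t a := by
  obtain ⟨m, hm⟩ := a.exists_height_eq_treeHeight
  have hle : ∀ x, t.height x ≤ a.height m := fun x => hm ▸ (t.height_le_treeHeight x).trans h
  -- descend from a vertex of maximal height to the level of `x`
  let σ x := a.parent^[a.height m - t.height x] m
  have hσ : IsLevelHom t a σ := by
    refine ⟨fun x => ?_, fun x => by rw [height_iterate_parent]; have := hle x; omega⟩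
    by_cases hx : x = t.root
    · simp only [σ, ← Function.iterate_succ_apply', hx, t.parent_root, height_root, Nat.sub_zero]
      rw [a.iterate_parent_of_height_le le_rfl, a.iterate_parent_of_height_le (by omega)]
    · simp only [σ, ← Function.iterate_succ_apply', t.height_parent hx]
      have := t.height_parent hx ▸ hle x
      congr 1; omega
  have : Nonempty {σ // IsLevelHom t a σ} := ⟨⟨σ, hσ⟩⟩
  exact Nat.card_pos

lemma levelHomCount_eq_zero [Fintype T] [Fintype A] (t : InTree T) (a : InTree A)
    (h : a.treeHeight < t.treeHeight) : levelHomCount t a = 0 := by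
  obtain ⟨v, hv⟩ := t.exists_height_eq_treeHeight
  have : IsEmpty {σ // IsLevelHom t a σ} := ⟨fun σ => by
    have := a.height_le_treeHeight (σ.1 v)
    rw [σ.2.height_apply, hv] at this
    omega⟩
  exact Nat.card_of_isEmpty

lemma levelHomCount_eq_of_isomorphic_star {F : InTree T} {X : InTree A} {Y : InTree B}
    [Fintype T] [Fintype A] [Fintype B]
    (h₁ : F.treeHeight = X.treeHeight) (h₂ : X.treeHeight = Y.treeHeight)
    (hiso : Isomorphic (F.star X).Edge (F.star Y).Edge) {S : Type*} [Finite S] (s : InTree S) :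
    levelHomCount s X = levelHomCount s Y := by
  have := Fintype.ofFinite S
  obtain ⟨e, he⟩ := exists_semiconj_of_isomorphic hiso
  have hstar := levelHomCount_congr_right (t := s) e he
  rw [levelHomCount_star, levelHomCount_star] at hstar
  rcases le_or_gt s.treeHeight F.treeHeight with hle | hgt
  · exact Nat.eq_of_mul_eq_mul_left (levelHomCount_pos s F hle) hstar
  · rw [levelHomCount_eq_zero s X (by omega), levelHomCount_eq_zero s Y (by omega)]

structure IsCongruence (t : InTree T) (c : Setoid T) : Prop where
  rel_parent : ∀ ⦃x y⦄, c x y → c (t.parent x) (t.parent y)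
  height_eq : ∀ ⦃x y⦄, c x y → t.height x = t.height y

lemma IsLevelHom.isCongruence_ker {σ : T → A} (hσ : IsLevelHom t a σ) :
    t.IsCongruence (Setoid.ker σ) where
  rel_parent x y h := by
    rw [Setoid.ker_def, hσ.semiconj x, hσ.semiconj y, Setoid.ker_def.mp h]
  height_eq x y h := by rw [← hσ.height_apply, ← hσ.height_apply, Setoid.ker_def.mp h]

section Quotient

variable {c : Setoid T} (hc : t.IsCongruence c)

def quotient : InTree (Quotient c) where
  root := ⟦t.root⟧
  parent := Quotient.map t.parent hc.rel_parent
  parent_root := congrArg _ t.parent_root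
  reaches_root x := x.inductionOn fun x => ⟨t.height x, by
    rw [← Function.Semiconj.iterate_right (f := Quotient.mk c) (fun _ => rfl), t.height_spec]⟩

lemma isLevelHom_quotient_mk : IsLevelHom t (t.quotient hc) (Quotient.mk c) := by
  refine ⟨fun _ => rfl, height_apply_of_semiconj (fun _ => rfl) fun x hx => ?_⟩
  rw [← t.height_eq_zero_iff, hc.height_eq (Quotient.exact hx), height_root]

lemma isLevelHom_comp_mk_iff {j : Quotient c → A} :
    IsLevelHom t a (j ∘ Quotient.mk c) ↔ IsLevelHom (t.quotient hc) a j := by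
  refine ⟨fun h => ⟨fun q => q.inductionOn h.semiconj, fun q => q.inductionOn fun x => ?_⟩,
    fun h => h.comp (isLevelHom_quotient_mk hc)⟩
  rw [(isLevelHom_quotient_mk hc).height_apply]
  exact h.height_apply x

end Quotient

noncomputable def levelHomCountWithKer (t : InTree T) (a : InTree A) (c : Setoid T) : ℕ :=
  Nat.card {σ : T → A // IsLevelHom t a σ ∧ Setoid.ker σ = c}

lemma levelHomCount_eq_sum [Finite T] [Finite A] (t : InTree T) (a : InTree A) :
    levelHomCount t a = ∑ c : Setoid T, levelHomCountWithKer t a c := by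
  rw [levelHomCount, ← Nat.card_congr (Equiv.sigmaFiberEquiv
    fun σ : {σ // IsLevelHom t a σ} => Setoid.ker σ.1), Nat.card_sigma]
  exact Finset.sum_congr rfl fun c _ => Nat.card_congr
    (Equiv.subtypeSubtypeEquivSubtypeInter (IsLevelHom t a) (Setoid.ker · = c))

lemma levelHomCountWithKer_bot : levelHomCountWithKer t a ⊥ = levelEmbCount t a := by
  simp only [levelHomCountWithKer, Setoid.ker_eq_bot_iff, levelEmbCount]

lemma levelHomCountWithKer_of_not_isCongruence {c : Setoid T} (hc : ¬ t.IsCongruence c) :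
    levelHomCountWithKer t a c = 0 :=
  have : IsEmpty {σ // IsLevelHom t a σ ∧ Setoid.ker σ = c} :=
    ⟨fun σ => hc (σ.2.2 ▸ σ.2.1.isCongruence_ker)⟩
  Nat.card_of_isEmpty

/-- A level map with kernel `c` factors uniquely through `Quotient.mk c` as an injective
level map. -/
lemma levelHomCountWithKer_eq_levelEmbCount_quotient {c : Setoid T} (hc : t.IsCongruence c) :
    levelHomCountWithKer t a c = levelEmbCount (t.quotient hc) a := by
  refine Nat.card_congr
    { toFun σ := ⟨Quotient.lift σ.1 fun x y h => ?_, ?_, ?_⟩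
      invFun j := ⟨j.1 ∘ Quotient.mk c, (isLevelHom_comp_mk_iff hc).mpr j.2.1,
        Setoid.ext fun x y => j.2.2.eq_iff.trans Quotient.eq⟩
      left_inv σ := rfl
      right_inv j := Subtype.ext (funext fun q => q.inductionOn fun _ => rfl) }
  · rw [← σ.2.2] at h; exact h
  · exact (isLevelHom_comp_mk_iff hc).mp σ.2.1
  · rintro ⟨x⟩ ⟨y⟩ h
    exact Quotient.sound (σ.2.2 ▸ h)

universe u

/-- Lovász's counting argument: `levelHomCount s x` is `levelEmbCount s x` plus the
`levelEmbCount`s out of the proper quotients of `s`, which are smaller than `s`. -/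
theorem levelEmbCount_eq_of_forall_levelHomCount_eq [Finite A] [Finite B]
    {x : InTree A} {y : InTree B}
    (h : ∀ (S : Type u) [Finite S] (s : InTree S), levelHomCount s x = levelHomCount s y)
    {S : Type u} [Finite S] (s : InTree S) : levelEmbCount s x = levelEmbCount s y := by
  induction hn : Nat.card S using Nat.strong_induction_on generalizing S with
  | _ n ih =>
  classical
  have hquot : ∀ c ∈ Finset.univ.erase ⊥,
      levelHomCountWithKer s x c = levelHomCountWithKer s y c := by
    intro c hc
    by_cases hcong : s.IsCongruence c
    · rw [levelHomCountWithKer_eq_levelEmbCount_quotient hcong,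
        levelHomCountWithKer_eq_levelEmbCount_quotient hcong]
      exact ih _ (hn ▸ Setoid.card_quotient_lt_of_ne_bot (Finset.ne_of_mem_erase hc)) _ rfl
    · rw [levelHomCountWithKer_of_not_isCongruence hcong,
        levelHomCountWithKer_of_not_isCongruence hcong]
  have hcount := h S s
  simp only [levelHomCount_eq_sum, ← Finset.add_sum_erase _ _ (Finset.mem_univ ⊥),
    levelHomCountWithKer_bot, Finset.sum_congr rfl hquot] at hcount
  exact Nat.add_right_cancel hcount

lemma isomorphic_edge_of_levelEmbCount_pos [Finite T] [Finite A] {t : InTree T} {a : InTree A}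
    (hta : 0 < levelEmbCount t a) (hat : 0 < levelEmbCount a t) : Isomorphic t.Edge a.Edge := by
  obtain ⟨⟨σ, hσ, hσinj⟩⟩ := Nat.card_pos_iff.mp hta |>.1
  obtain ⟨⟨τ, -, hτinj⟩⟩ := Nat.card_pos_iff.mp hat |>.1
  exact isomorphic_edge_of_bijective hσ.semiconj
    (hσinj.bijective_of_nat_card_le (Nat.card_le_card_of_injective τ hτinj))

end DDS.InTree

/-- Cancellation for finite in-trees: if `F`, `X`, `Y` are finite in-trees of the same height
and `F ⋆ X ≅ F ⋆ Y`, then `X ≅ Y`. -/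
theorem star_cancel_finite {V V₁ V₂ : Type*} [Fintype V] [Fintype V₁] [Fintype V₂]
    (F : InTree V) (X : InTree V₁) (Y : InTree V₂)
    (h₁ : F.treeHeight = X.treeHeight) (h₂ : X.treeHeight = Y.treeHeight)
    (hiso : Isomorphic (F.star X).Edge (F.star Y).Edge) :
    Isomorphic X.Edge Y.Edge := by
  have hXX := levelEmbCount_eq_of_forall_levelHomCount_eq
    (fun _ _ s => levelHomCount_eq_of_isomorphic_star h₁ h₂ hiso s) X
  have hYY := levelEmbCount_eq_of_forall_levelHomCount_eq
    (fun _ _ s => levelHomCount_eq_of_isomorphic_star h₁ h₂ hiso s) Y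
  exact isomorphic_edge_of_levelEmbCount_pos (hXX ▸ levelEmbCount_self_pos X)
    (hYY ▸ levelEmbCount_self_pos Y)
end

section
/- For any locally finite infinite in-trees I, X, and Y, if the digraphs of the ⋆ products I ⋆ X and I ⋆ Y are isomorphic, then the digraphs of X and Y are isomorphic. -/
open DDS DDS.InTree

/-!
Encode an in-tree by its parent map and its height function: a graded map, i.e. a self-map
`parent` with `level (parent v) = level v - 1`. A homomorphism of graded maps from `A` into
`I ⋆ X` is a pair of homomorphisms into `I` and into `X`, and when `I` is infinite and locally
finite there is at least one into `I`; so `X` and `Y` receive equally many homomorphisms from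
every finite graded map. By Lovász's argument (a homomorphism is an embedding of the quotient by
its kernel) they then receive equally many embeddings, so the truncation of `X` at any height
embeds into `Y` and vice versa. Truncations being finite, they are isomorphic, and König's
lemma glues isomorphisms of all truncations into an isomorphism `X ≅ Y`.
-/

open Function

universe u u₁ u₂

structure GradedMap (α : Type*) where
  parent : α → α
  level : α → ℕ
  level_parent : ∀ v, level (parent v) = level v - 1

namespace GradedMap

variable {α β γ : Type*}

lemma level_parent_le (B : GradedMap β) (v : β) : B.level (B.parent v) ≤ B.level v :=
  (B.level_parent v).trans_le (Nat.sub_le _ _)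

lemma level_iterate_parent (B : GradedMap β) (k : ℕ) (v : β) :
    B.level (B.parent^[k] v) = B.level v - k := by
  induction k with
  | zero => rfl
  | succ k ih => rw [iterate_succ_apply', B.level_parent, ih, Nat.sub_sub]

structure IsHom (A : GradedMap α) (B : GradedMap β) (f : α → β) : Prop where
  map_parent : ∀ v, f (A.parent v) = B.parent (f v)
  level_map : ∀ v, B.level (f v) = A.level v

abbrev Iso (A : GradedMap α) (B : GradedMap β) := {e : α ≃ β // A.IsHom B e}

section Hom

variable {A : GradedMap α} {B : GradedMap β} {C : GradedMap γ}

lemma IsHom.comp {g : β → γ} {f : α → β} (hg : B.IsHom C g) (hf : A.IsHom B f) :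
    A.IsHom C (g ∘ f) :=
  ⟨fun v => by simp only [comp_apply, hf.map_parent, hg.map_parent],
    fun v => by simp only [comp_apply, hg.level_map, hf.level_map]⟩

lemma IsHom.symm {e : α ≃ β} (he : A.IsHom B e) : B.IsHom A e.symm :=
  ⟨fun w => e.injective (by simp only [he.map_parent, Equiv.apply_symm_apply]),
    fun w => by rw [← he.level_map, Equiv.apply_symm_apply]⟩

lemma card_homs_congr_right (A : GradedMap α) (e : B.Iso C) :
    Nat.card {f // A.IsHom B f} = Nat.card {f // A.IsHom C f} :=
  Nat.card_congr
    { toFun f := ⟨e.1 ∘ f.1, e.2.comp f.2⟩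
      invFun f := ⟨e.1.symm ∘ f.1, e.2.symm.comp f.2⟩
      left_inv f := by ext; simp
      right_inv f := by ext; simp }

end Hom

def HasFiniteLevels (B : GradedMap β) : Prop := ∀ n, {v | B.level v = n}.Finite

lemma HasFiniteLevels.finite_homs {B : GradedMap β} (hB : B.HasFiniteLevels) [Finite α]
    (A : GradedMap α) : Finite {f // A.IsHom B f} := by
  have (v : α) : Finite {w // B.level w = A.level v} := (hB (A.level v)).to_subtype
  exact Finite.of_injective
    (fun f v => (⟨f.1 v, f.2.level_map v⟩ : {w // B.level w = A.level v}))
    fun f g hfg => Subtype.ext (funext fun v => congrArg Subtype.val (congrFun hfg v))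

def trunc (B : GradedMap β) (n : ℕ) : GradedMap {v // B.level v ≤ n} where
  parent v := ⟨B.parent v, (B.level_parent_le v).trans v.2⟩
  level v := B.level v
  level_parent v := B.level_parent v

lemma isHom_trunc_val (B : GradedMap β) (n : ℕ) : (B.trunc n).IsHom B Subtype.val :=
  ⟨fun _ => rfl, fun _ => rfl⟩

lemma HasFiniteLevels.finite_trunc {B : GradedMap β} (hB : B.HasFiniteLevels) (n : ℕ) :
    Finite {v // B.level v ≤ n} :=
  ((Set.finite_Iic n).preimage' fun m _ => hB m).to_subtype

section Congruence

variable (A : GradedMap α)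

structure IsCongr (s : Setoid α) : Prop where
  parent : ∀ ⦃v w⦄, s v w → s (A.parent v) (A.parent w)
  level : ∀ ⦃v w⦄, s v w → A.level v = A.level w

variable {A}

def quotient {s : Setoid α} (hs : A.IsCongr s) : GradedMap (Quotient s) where
  parent := Quotient.map A.parent hs.parent
  level := Quotient.lift A.level hs.level
  level_parent := Quotient.ind A.level_parent

lemma IsHom.isCongr_ker {B : GradedMap β} {f : α → β} (hf : A.IsHom B f) :
    A.IsCongr (Setoid.ker f) where
  parent v w h := by
    simp only [Setoid.ker_def, hf.map_parent] at h ⊢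
    rw [h]
  level v w h := by rw [← hf.level_map, ← hf.level_map, Setoid.ker_def.mp h]

lemma isCongr_bot : A.IsCongr ⊥ where
  parent _ _ h := congrArg A.parent h
  level _ _ h := congrArg A.level h

lemma card_quotient_lt [Finite α] {s : Setoid α} (hs : s ≠ ⊥) :
    Nat.card (Quotient s) < Nat.card α := by
  refine (Nat.card_le_card_of_surjective _ Quotient.mk_surjective).lt_of_ne fun h => hs ?_
  rw [← Setoid.ker_mk_eq s, Setoid.ker_eq_bot_iff]
  exact (Quotient.mk_surjective.bijective_of_nat_card_le h.ge).1

instance [Finite α] : Finite {s : Setoid α // A.IsCongr s} :=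
  have : Finite (Setoid α) :=
    Finite.of_injective (fun s : Setoid α => ⇑s) fun _ _ h => Setoid.eq_iff_rel_eq.mpr h
  Subtype.finite

def homsWithKerEquiv (B : GradedMap β) {s : Setoid α} (hs : A.IsCongr s) :
    {f : {f // A.IsHom B f} // Setoid.ker f.1 = s} ≃
      {g // (quotient hs).IsHom B g ∧ Injective g} where
  toFun f := by
    refine ⟨Quotient.lift f.1.1 fun v w h => ?_, ⟨Quotient.ind f.1.2.map_parent,
      Quotient.ind f.1.2.level_map⟩, ?_⟩
    · rw [← f.2] at h
      exact h
    · refine Quotient.ind₂ fun v w h => Quotient.sound ?_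
      rw [← f.2]
      exact h
  invFun g :=
    ⟨⟨fun v => g.1 ⟦v⟧, fun v => g.2.1.map_parent ⟦v⟧, fun v => g.2.1.level_map ⟦v⟧⟩,
    Setoid.ext fun _ _ =>
      ⟨fun h => Quotient.exact (g.2.2 h), fun h => congrArg g.1 (Quotient.sound h)⟩⟩
  left_inv _ := rfl
  right_inv _ := Subtype.ext (funext (Quotient.ind fun _ => rfl))

def homsWithKerBotEquiv (B : GradedMap β) :
    {f : {f // A.IsHom B f} // Setoid.ker f.1 = ⊥} ≃ {f // A.IsHom B f ∧ Injective f} :=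
  (Equiv.subtypeSubtypeEquivSubtypeInter (A.IsHom B) (fun f => Setoid.ker f = ⊥)).trans
    (Equiv.subtypeEquivRight fun _ => and_congr_right' Setoid.ker_eq_bot_iff)

lemma card_homs_eq_sum [Finite α] [Fintype {s : Setoid α // A.IsCongr s}] {B : GradedMap β}
    (hB : B.HasFiniteLevels) :
    Nat.card {f // A.IsHom B f} = ∑ s : {s : Setoid α // A.IsCongr s},
      Nat.card {f : {f // A.IsHom B f} // Setoid.ker f.1 = s.1} := by
  have := hB.finite_homs A
  rw [← Nat.card_congr (Equiv.sigmaFiberEquiv fun f : {f // A.IsHom B f} =>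
    (⟨Setoid.ker f.1, f.2.isCongr_ker⟩ : {s : Setoid α // A.IsCongr s})), Nat.card_sigma]
  exact Finset.sum_congr rfl fun _ _ =>
    Nat.card_congr (Equiv.subtypeEquivRight fun _ => Subtype.ext_iff)

/-- Lovász's argument: splitting the homomorphisms by their kernels, the term of the trivial
kernel counts embeddings and every other term counts embeddings of a smaller quotient. -/
theorem card_embeddings_eq_of_card_homs_eq {β₁ β₂ : Type*} {B₁ : GradedMap β₁}
    {B₂ : GradedMap β₂} (hB₁ : B₁.HasFiniteLevels) (hB₂ : B₂.HasFiniteLevels)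
    (h : ∀ {α : Type u} [Finite α] (A : GradedMap α),
      Nat.card {f // A.IsHom B₁ f} = Nat.card {f // A.IsHom B₂ f})
    {α : Type u} [Finite α] (A : GradedMap α) :
    Nat.card {f // A.IsHom B₁ f ∧ Injective f} =
      Nat.card {f // A.IsHom B₂ f ∧ Injective f} := by
  induction hn : Nat.card α using Nat.strong_induction_on generalizing α with
  | _ n ih =>
  classical
  let _ : Fintype {s : Setoid α // A.IsCongr s} := Fintype.ofFinite _
  let bot : {s : Setoid α // A.IsCongr s} := ⟨⊥, isCongr_bot⟩
  have hsum := h A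
  rw [card_homs_eq_sum hB₁, card_homs_eq_sum hB₂,
    ← Finset.add_sum_erase _ _ (Finset.mem_univ bot),
    ← Finset.add_sum_erase _ _ (Finset.mem_univ bot)] at hsum
  have hquot : ∀ s ∈ Finset.univ.erase bot,
      Nat.card {f : {f // A.IsHom B₁ f} // Setoid.ker f.1 = s.1} =
        Nat.card {f : {f // A.IsHom B₂ f} // Setoid.ker f.1 = s.1} := by
    rintro ⟨s, hs⟩ hs_ne
    have hs_ne : s ≠ ⊥ := fun h => Finset.ne_of_mem_erase hs_ne (Subtype.ext h)
    rw [Nat.card_congr (homsWithKerEquiv B₁ hs), Nat.card_congr (homsWithKerEquiv B₂ hs)]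
    exact ih _ (hn ▸ card_quotient_lt hs_ne) (quotient hs) rfl
  rw [Finset.sum_congr rfl hquot, Nat.add_right_cancel_iff] at hsum
  rwa [← Nat.card_congr (homsWithKerBotEquiv B₁), ← Nat.card_congr (homsWithKerBotEquiv B₂)]

end Congruence

section Gluing

open CategoryTheory Opposite

variable {β₁ : Type u₁} {β₂ : Type u₂} {B₁ : GradedMap β₁} {B₂ : GradedMap β₂}

lemma nonempty_iso_trunc_of_embeddings (hB₁ : B₁.HasFiniteLevels) (hB₂ : B₂.HasFiniteLevels)
    {n : ℕ} {f : {v // B₁.level v ≤ n} → β₂}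
    (hf : (B₁.trunc n).IsHom B₂ f ∧ Injective f)
    {g : {w // B₂.level w ≤ n} → β₁} (hg : (B₂.trunc n).IsHom B₁ g ∧ Injective g) :
    Nonempty ((B₁.trunc n).Iso (B₂.trunc n)) := by
  have := hB₁.finite_trunc n
  have := hB₂.finite_trunc n
  let f' v : {w // B₂.level w ≤ n} := ⟨f v, (hf.1.level_map v).trans_le v.2⟩
  let g' w : {v // B₁.level v ≤ n} := ⟨g w, (hg.1.level_map w).trans_le w.2⟩
  have hf' : Injective f' := fun _ _ h => hf.2 (congrArg Subtype.val h)
  have hg' : Injective g' := fun _ _ h => hg.2 (congrArg Subtype.val h)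
  exact ⟨Equiv.ofBijective f'
      (hf'.bijective_of_nat_card_le (Nat.card_le_card_of_injective g' hg')),
    fun v => Subtype.ext (hf.1.map_parent v), hf.1.level_map⟩

variable (B₁ B₂)

def restrictTruncIso {m n : ℕ} (hmn : m ≤ n) (e : (B₁.trunc n).Iso (B₂.trunc n)) :
    (B₁.trunc m).Iso (B₂.trunc m) :=
  ⟨{ toFun v := ⟨(e.1 ⟨v.1, v.2.trans hmn⟩).1, (e.2.level_map _).trans_le v.2⟩
     invFun w := ⟨(e.1.symm ⟨w.1, w.2.trans hmn⟩).1, (e.2.symm.level_map _).trans_le w.2⟩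
     left_inv v := by simp
     right_inv w := by simp },
    fun v => Subtype.ext (Subtype.ext_iff.mp (e.2.map_parent ⟨v.1, v.2.trans hmn⟩) :),
    fun v => e.2.level_map ⟨v.1, v.2.trans hmn⟩⟩

def truncIsoSystem : ℕᵒᵖ ⥤ Type _ where
  obj n := (B₁.trunc n.unop).Iso (B₂.trunc n.unop)
  map f := TypeCat.ofHom (restrictTruncIso B₁ B₂ (leOfHom f.unop))
  map_id _ := by ext; rfl
  map_comp _ _ := by ext; rfl

variable {B₁ B₂}

/-- König's lemma provides a compatible family of isomorphisms of all truncations; the image of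
`v` is read off at level `B₁.level v`. -/
theorem nonempty_iso_of_forall_trunc (hB₁ : B₁.HasFiniteLevels)
    (h : ∀ n, Nonempty ((B₁.trunc n).Iso (B₂.trunc n))) : Nonempty (B₁.Iso B₂) := by
  have (n : ℕᵒᵖ) : Finite ((truncIsoSystem B₁ B₂).obj n) := by
    have := hB₁.finite_trunc n.unop
    exact Subtype.finite
  have (n : ℕᵒᵖ) : Nonempty ((truncIsoSystem B₁ B₂).obj n) := h n.unop
  obtain ⟨E, hE⟩ := nonempty_sections_of_finite_inverse_system (truncIsoSystem B₁ B₂)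
  let Φ v := ((E (op (B₁.level v))).1 ⟨v, le_rfl⟩).1
  have hΦ {n : ℕ} (v : β₁) (hv : B₁.level v ≤ n) : ((E (op n)).1 ⟨v, hv⟩).1 = Φ v :=
    congrArg (fun e => (e.1 ⟨v, le_rfl⟩).1) (hE (homOfLE hv).op)
  have hinj : Injective Φ := fun v w h => by
    have hv := le_max_left (B₁.level v) (B₁.level w)
    have hw := le_max_right (B₁.level v) (B₁.level w)
    exact congrArg Subtype.val ((E (op _)).1.injective
      (Subtype.ext ((hΦ v hv).trans (h.trans (hΦ w hw).symm))))
  have hsurj : Surjective Φ := fun w => by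
    let x := (E (op (B₂.level w))).1.symm ⟨w, le_rfl⟩
    exact ⟨x.1, (hΦ x.1 x.2).symm.trans (by simp [x])⟩
  refine ⟨Equiv.ofBijective Φ ⟨hinj, hsurj⟩, fun v => ?_,
    fun v => (E (op _)).2.level_map ⟨v, le_rfl⟩⟩
  change Φ (B₁.parent v) = B₂.parent (Φ v)
  rw [← hΦ _ (B₁.level_parent_le v)]
  exact Subtype.ext_iff.mp ((E (op _)).2.map_parent ⟨v, le_rfl⟩)

lemma exists_embedding_trunc (hB₁ : B₁.HasFiniteLevels) (hB₂ : B₂.HasFiniteLevels)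
    (h : ∀ {α : Type u₁} [Finite α] (A : GradedMap α),
      Nat.card {f // A.IsHom B₁ f} = Nat.card {f // A.IsHom B₂ f}) (n : ℕ) :
    ∃ f, (B₁.trunc n).IsHom B₂ f ∧ Injective f := by
  have := hB₁.finite_trunc n
  have := hB₁.finite_homs (B₁.trunc n)
  have : Finite {f // (B₁.trunc n).IsHom B₁ f ∧ Injective f} :=
    Finite.of_injective (fun f => (⟨f.1, f.2.1⟩ : {f // (B₁.trunc n).IsHom B₁ f}))
      fun _ _ h => Subtype.ext (by simpa using h)
  have hpos : Nat.card {f // (B₁.trunc n).IsHom B₁ f ∧ Injective f} ≠ 0 :=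
    Nat.card_ne_zero.mpr ⟨⟨_, isHom_trunc_val B₁ n, Subtype.val_injective⟩, this⟩
  rw [card_embeddings_eq_of_card_homs_eq hB₁ hB₂ h] at hpos
  obtain ⟨f, hf⟩ := (Nat.card_ne_zero.mp hpos).1.some
  exact ⟨f, hf⟩

theorem nonempty_iso_of_card_homs_eq (hB₁ : B₁.HasFiniteLevels) (hB₂ : B₂.HasFiniteLevels)
    (h₁ : ∀ {α : Type u₁} [Finite α] (A : GradedMap α),
      Nat.card {f // A.IsHom B₁ f} = Nat.card {f // A.IsHom B₂ f})
    (h₂ : ∀ {α : Type u₂} [Finite α] (A : GradedMap α),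
      Nat.card {f // A.IsHom B₁ f} = Nat.card {f // A.IsHom B₂ f}) :
    Nonempty (B₁.Iso B₂) := by
  refine nonempty_iso_of_forall_trunc hB₁ fun n => ?_
  obtain ⟨f, hf⟩ := exists_embedding_trunc hB₁ hB₂ h₁ n
  obtain ⟨g, hg⟩ := exists_embedding_trunc hB₂ hB₁ (fun A => (h₂ A).symm) n
  exact nonempty_iso_trunc_of_embeddings hB₁ hB₂ hf hg

end Gluing

end GradedMap

namespace DDS.InTree

variable {V W : Type*}

lemma height_parent_eq_sub (T : InTree V) (v : V) :
    T.height (T.parent v) = T.height v - 1 := by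
  by_cases hv : v = T.root
  · rw [hv, T.parent_root, T.height_root]
  · rw [T.height_parent hv, Nat.add_sub_cancel]

noncomputable def toGradedMap (T : InTree V) : GradedMap V where
  parent := T.parent
  level := T.height
  level_parent := T.height_parent_eq_sub

lemma hasFiniteLevels_toGradedMap (T : InTree V)
    (hT : ∀ w, {v | v ≠ T.root ∧ T.parent v = w}.Finite) :
    T.toGradedMap.HasFiniteLevels := by
  intro n
  induction n with
  | zero => exact (Set.finite_singleton T.root).subset fun v hv => T.height_eq_zero_iff.mp hv
  | succ n ih =>
    have hfiber (w : V) : (T.parent ⁻¹' {w}).Finite :=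
      ((hT w).insert T.root).subset fun v hv => or_iff_not_imp_left.mpr fun hr => ⟨hr, hv⟩
    refine (ih.preimage' (f := T.parent) fun w _ => hfiber w).subset fun v hv => ?_
    change T.height (T.parent v) = n
    rw [T.height_parent_eq_sub, show T.height v = n + 1 from hv, Nat.add_sub_cancel]

lemma exists_le_height [Infinite V] (T : InTree V)
    (hT : ∀ w, {v | v ≠ T.root ∧ T.parent v = w}.Finite) (N : ℕ) :
    ∃ w, N ≤ T.height w := by
  by_contra! h
  exact Set.infinite_univ (((Set.finite_Iio N).preimage' fun m _ =>
    T.hasFiniteLevels_toGradedMap hT m).subset fun v _ => h v)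

/-- The homomorphism sends `v` to the ancestor at height `A.level v` of a vertex `w` that is
higher than every level of `A`. -/
lemma exists_hom_toGradedMap {α : Type*} [Finite α] [Infinite V] (T : InTree V)
    (hT : ∀ w, {v | v ≠ T.root ∧ T.parent v = w}.Finite) (A : GradedMap α) :
    ∃ f, A.IsHom T.toGradedMap f := by
  obtain ⟨N, hN⟩ := (Set.finite_range A.level).bddAbove
  obtain ⟨w, hw⟩ := T.exists_le_height hT N
  have hle (v : α) : A.level v ≤ T.height w := (hN ⟨v, rfl⟩).trans hw
  refine ⟨fun v => T.parent^[T.height w - A.level v] w, fun v => ?_, fun v => ?_⟩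
  · change T.parent^[T.height w - A.level (A.parent v)] w = T.parent (T.parent^[_] w)
    rw [A.level_parent]
    rcases Nat.eq_zero_or_eq_succ_pred (A.level v) with h0 | hsucc
    · simp only [h0, Nat.zero_sub, Nat.sub_zero, T.height_spec, T.parent_root]
    · rw [← iterate_succ_apply' T.parent]
      congr 1
      have := hle v
      omega
  · have := hle v
    exact (T.toGradedMap.level_iterate_parent _ w).trans (by change T.height w - _ = _; omega)

lemma height_apply_eq_of_semiconj {S : InTree V} {U : InTree W} {f : V → W}
    (hf : Semiconj f S.parent U.parent) (hroot : ∀ v, f v = U.root ↔ v = S.root) (v : V) :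
    U.height (f v) = S.height v := by
  unfold height
  congr 1
  ext k
  change U.parent^[k] (f v) = U.root ↔ S.parent^[k] v = S.root
  rw [← hf.iterate_right k v, hroot]

lemma star_height (I : InTree V) (X : InTree W) (x : StarVertex I X) :
    (I.star X).height x = I.height x.1.1 := by
  refine (height_apply_eq_of_semiconj (f := fun x : StarVertex I X => x.1.1) (fun _ => rfl)
    (fun x => ⟨fun h => Subtype.ext (Prod.ext h ?_), fun h => by rw [h]; rfl⟩) x).symm
  change x.1.2 = X.root
  rw [← X.height_eq_zero_iff, ← x.2, h, I.height_root]

noncomputable def homsStarEquiv {α : Type*} (A : GradedMap α) (I : InTree V) (X : InTree W) :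
    {f // A.IsHom (I.star X).toGradedMap f} ≃
      {f // A.IsHom I.toGradedMap f} × {f // A.IsHom X.toGradedMap f} where
  toFun f :=
    (⟨fun v => (f.1 v).1.1,
      fun v => congrArg (fun x : StarVertex I X => x.1.1) (f.2.map_parent v),
      fun v => (star_height I X _).symm.trans (f.2.level_map v)⟩,
    ⟨fun v => (f.1 v).1.2,
      fun v => congrArg (fun x : StarVertex I X => x.1.2) (f.2.map_parent v),
      fun v => (f.1 v).2.symm.trans ((star_height I X _).symm.trans (f.2.level_map v))⟩)
  invFun g :=
    ⟨fun v => ⟨(g.1.1 v, g.2.1 v), (g.1.2.level_map v).trans (g.2.2.level_map v).symm⟩,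
    fun v => Subtype.ext (Prod.ext (g.1.2.map_parent v) (g.2.2.map_parent v)),
    fun v => (star_height I X _).trans (g.1.2.level_map v)⟩
  left_inv _ := rfl
  right_inv _ := rfl

section Isomorphism

variable {S : InTree V} {U : InTree W}

lemma isHom_of_edge_iff (e : V ≃ W) (he : ∀ u v, S.Edge u v ↔ U.Edge (e u) (e v)) :
    S.toGradedMap.IsHom U.toGradedMap e := by
  have hroot : e S.root = U.root := by
    by_contra hne
    exact ((he _ (e.symm (U.parent (e S.root)))).mpr (by simpa using ⟨hne, rfl⟩)).1 rfl
  have hpar : Semiconj e S.parent U.parent := fun v => by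
    by_cases hv : v = S.root
    · rw [hv, S.parent_root, hroot, U.parent_root]
    · exact ((he v (S.parent v)).mp ⟨hv, rfl⟩).2
  exact ⟨hpar, height_apply_eq_of_semiconj hpar fun v => by rw [← hroot, e.injective.eq_iff]⟩

lemma isomorphic_of_iso (e : S.toGradedMap.Iso U.toGradedMap) : Isomorphic S.Edge U.Edge := by
  refine ⟨e.1, fun u v => and_congr ?_ ?_⟩
  · have : U.height (e.1 u) = S.height u := e.2.level_map u
    rw [ne_eq, ne_eq, ← S.height_eq_zero_iff, ← U.height_eq_zero_iff, this]
  · have : e.1 (S.parent u) = U.parent (e.1 u) := e.2.map_parent u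
    rw [← e.1.injective.eq_iff, this]

end Isomorphism

/-- `I` cancels from `hom(A, I ⋆ X) = hom(A, I) * hom(A, X)` because `hom(A, I) ≠ 0`. -/
lemma card_homs_eq_of_isomorphic_star {V₁ V₂ : Type*} [Infinite V] {I : InTree V}
    {X : InTree V₁} {Y : InTree V₂} (hI : ∀ w, {v | v ≠ I.root ∧ I.parent v = w}.Finite)
    (hiso : Isomorphic (I.star X).Edge (I.star Y).Edge) {α : Type*} [Finite α]
    (A : GradedMap α) :
    Nat.card {f // A.IsHom X.toGradedMap f} = Nat.card {f // A.IsHom Y.toGradedMap f} := by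
  obtain ⟨e, he⟩ := hiso
  have hstar := GradedMap.card_homs_congr_right A ⟨e, isHom_of_edge_iff e he⟩
  rw [Nat.card_congr (homsStarEquiv A I X), Nat.card_congr (homsStarEquiv A I Y), Nat.card_prod,
    Nat.card_prod] at hstar
  have := (I.hasFiniteLevels_toGradedMap hI).finite_homs A
  have : Nonempty {f // A.IsHom I.toGradedMap f} :=
    nonempty_subtype.mpr (I.exists_hom_toGradedMap hI A)
  exact Nat.eq_of_mul_eq_mul_left Nat.card_pos hstar

end DDS.InTree

theorem star_cancel_infinite_general {V V₁ V₂ : Type*} [Infinite V]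
    (I : InTree V) (X : InTree V₁) (Y : InTree V₂)
    (hI : ∀ w, {v | v ≠ I.root ∧ I.parent v = w}.Finite)
    (hX : ∀ w, {v | v ≠ X.root ∧ X.parent v = w}.Finite)
    (hY : ∀ w, {v | v ≠ Y.root ∧ Y.parent v = w}.Finite)
    (hiso : Isomorphic (I.star X).Edge (I.star Y).Edge) :
    Isomorphic X.Edge Y.Edge := by
  obtain ⟨e⟩ := GradedMap.nonempty_iso_of_card_homs_eq (X.hasFiniteLevels_toGradedMap hX)
    (Y.hasFiniteLevels_toGradedMap hY) (card_homs_eq_of_isomorphic_star hI hiso)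
    (card_homs_eq_of_isomorphic_star hI hiso)
  exact isomorphic_of_iso e

/-- Cancellation for locally finite infinite in-trees: if `I ⋆ X ≅ I ⋆ Y`, then `X ≅ Y`. -/
theorem star_cancel_infinite {V V₁ V₂ : Type*} [Infinite V] [Infinite V₁] [Infinite V₂]
    (I : InTree V) (X : InTree V₁) (Y : InTree V₂)
    (hI : ∀ w, {v | v ≠ I.root ∧ I.parent v = w}.Finite)
    (hX : ∀ w, {v | v ≠ X.root ∧ X.parent v = w}.Finite)
    (hY : ∀ w, {v | v ≠ Y.root ∧ Y.parent v = w}.Finite)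
    (hiso : Isomorphic (I.star X).Edge (I.star Y).Edge) :
    Isomorphic X.Edge Y.Edge :=
  star_cancel_infinite_general I X Y hI hX hY hiso
end

section
/- The ⋆ product of unrolls is the unroll of the product: let f : α → α and h : γ → γ be maps on finite types, let a be a periodic point of f and x a periodic point of h. Then (a,x) is a periodic point of the product map f × h : α × γ → α × γ, (u,w) ↦ (f u, h w), and the digraph of U(f,a) ⋆ U(h,x) is isomorphic to the digraph of the unroll U(f × h, (a,x)). -/
open DDS DDS.InTree

/-! A vertex of an unroll `U(f, v)` is a pair `(u, i)` whose height is exactly `i`. Hence a vertex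
of `U(f, a) ⋆ U(h, x)` is a pair `((u, i), (w, i))` with a common index, i.e. a vertex
`((u, w), i)` of `U(f × h, (a, x))`, and both parent maps act as `(·, i + 1) ↦ (f × h ·, i)`. -/

namespace DDS

namespace InTree

variable {V W : Type*}

lemma height_eq_of_level (T : InTree V) (ℓ : V → ℕ) (hzero : ∀ v, ℓ v = 0 ↔ v = T.root)
    (hparent : ∀ v, v ≠ T.root → ℓ v = ℓ (T.parent v) + 1) (v : V) : T.height v = ℓ v := by
  induction hn : ℓ v generalizing v with
  | zero => rw [T.height_eq_zero_iff, ← hzero, hn]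
  | succ n ih =>
    have hv : v ≠ T.root := fun hroot => by have := (hzero v).2 hroot; omega
    have hpar : ℓ (T.parent v) = n := by have := hparent v hv; omega
    rw [T.height_parent hv, ih _ hpar]

lemma isomorphic_edge_of_equiv (T : InTree V) (T' : InTree W) (e : V ≃ W)
    (hroot : e T.root = T'.root) (hparent : ∀ v, e (T.parent v) = T'.parent (e v)) :
    Isomorphic T.Edge T'.Edge :=
  ⟨e, fun u v => by simp only [Edge, ← hroot, ← hparent, ne_eq, e.apply_eq_iff_eq]⟩

end InTree

section Unroll

variable {α : Type*} (f : α → α) (v : α)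

lemma unroll_height (z : UnrollVertex f v) : (unroll f v).height z = z.1.2 := by
  refine (unroll f v).height_eq_of_level (fun z => z.1.2) ?_ ?_ z
  · rintro ⟨⟨u, i⟩, hu⟩
    constructor
    · rintro (rfl : i = 0)
      obtain rfl : u = v := hu
      rfl
    · intro hroot
      exact congrArg (fun z : UnrollVertex f v => z.1.2) hroot
  · rintro ⟨⟨u, _ | i⟩, hu⟩ hne
    · obtain rfl : u = v := hu
      exact absurd rfl hne
    · rfl

end Unroll

section StarUnroll

variable {α γ : Type*} (f : α → α) (h : γ → γ) (a : α) (x : γ)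

lemma prodMap_iterate (n : ℕ) (z : α × γ) : (prodMap f h)^[n] z = (f^[n] z.1, h^[n] z.2) :=
  congrFun (Prod.map_iterate f h n) z

lemma StarVertex.unroll_index_eq (z : StarVertex (unroll f a) (unroll h x)) :
    z.1.1.1.2 = z.1.2.1.2 := by
  simpa only [unroll_height] using z.2

/-- `((u, i), (w, i)) ↦ ((u, w), i)`. -/
def starUnrollEquiv :
    StarVertex (unroll f a) (unroll h x) ≃ UnrollVertex (prodMap f h) (a, x) where
  toFun z := ⟨((z.1.1.1.1, z.1.2.1.1), z.1.1.1.2), by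
    rw [prodMap_iterate, z.1.1.2, StarVertex.unroll_index_eq f h a x z, z.1.2.2]⟩
  invFun z :=
    have hz := Prod.ext_iff.mp ((prodMap_iterate f h _ _).symm.trans z.2)
    ⟨(⟨(z.1.1.1, z.1.2), hz.1⟩, ⟨(z.1.1.2, z.1.2), hz.2⟩), by rw [unroll_height, unroll_height]⟩
  left_inv z := by
    obtain ⟨⟨⟨⟨u, i⟩, hu⟩, ⟨⟨w, j⟩, hw⟩⟩, hij⟩ := z
    obtain rfl : i = j := StarVertex.unroll_index_eq f h a x ⟨_, hij⟩
    rfl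
  right_inv _ := rfl

lemma starUnrollEquiv_parent (z : StarVertex (unroll f a) (unroll h x)) :
    starUnrollEquiv f h a x (((unroll f a).star (unroll h x)).parent z) =
      (unroll (prodMap f h) (a, x)).parent (starUnrollEquiv f h a x z) := by
  obtain ⟨⟨⟨⟨u, i⟩, hu⟩, ⟨⟨w, j⟩, hw⟩⟩, hij⟩ := z
  obtain rfl : i = j := StarVertex.unroll_index_eq f h a x ⟨_, hij⟩
  cases i <;> rfl

end StarUnroll

end DDS

theorem star_unroll_iso_unroll_prod_general {α γ : Type*}
    (f : α → α) (h : γ → γ) (a : α) (x : γ)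
    (ha : ∃ n, 1 ≤ n ∧ f^[n] a = a) (hx : ∃ n, 1 ≤ n ∧ h^[n] x = x) :
    (∃ n, 1 ≤ n ∧ (prodMap f h)^[n] (a, x) = (a, x)) ∧
      Isomorphic ((unroll f a).star (unroll h x)).Edge
        (unroll (prodMap f h) (a, x)).Edge := by
  obtain ⟨n, hn, hfa⟩ := ha
  obtain ⟨m, hm, hhx⟩ := hx
  have hperiodic : Function.IsPeriodicPt (prodMap f h) (n * m) (a, x) :=
    (Function.IsPeriodicPt.mul_const hfa m).prodMap (Function.IsPeriodicPt.const_mul hhx n)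
  exact ⟨⟨n * m, Nat.mul_pos hn hm, hperiodic⟩,
    isomorphic_edge_of_equiv _ _ (starUnrollEquiv f h a x) rfl (starUnrollEquiv_parent f h a x)⟩

/-- The `⋆` product of unrolls is the unroll of the product: for periodic points `a` of `f`
and `x` of `h`, the pair `(a, x)` is periodic for `f × h` and
`U(f, a) ⋆ U(h, x) ≅ U(f × h, (a, x))`. -/
theorem star_unroll_iso_unroll_prod {α γ : Type*} [Fintype α] [Fintype γ]
    (f : α → α) (h : γ → γ) (a : α) (x : γ)
    (ha : ∃ n, 1 ≤ n ∧ f^[n] a = a) (hx : ∃ n, 1 ≤ n ∧ h^[n] x = x) :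
    (∃ n, 1 ≤ n ∧ (prodMap f h)^[n] (a, x) = (a, x)) ∧
      Isomorphic ((unroll f a).star (unroll h x)).Edge
        (unroll (prodMap f h) (a, x)).Edge :=
  star_unroll_iso_unroll_prod_general f h a x ha hx
end
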